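/- arXiv:2311.11326 — 2 statements merged into one kernel-verified Lean document; each statement's English description precedes it below -/
import Mathlib

section
/- For every integer d ≥ 3, ∫₀^∞ [I₀(x/d)]^d e^{−x} dx = ∑_{k₁≥0} ⋯ ∑_{k_d≥0} Γ(2k₁+⋯+2k_d+1) / ((k₁)!² ⋯ (k_d)!² · (2d)^{2(k₁+⋯+k_d)}), i.e. the integral equals the d-fold series obtained by expanding the integrand in powers of x and integrating term by term, and this series is convergent. -/
open MeasureTheory Real Finset

/-- The modified Bessel function of the first kind of order zero,
`I₀(x) = ∑_{k ≥ 0} (x/2)^{2k} / (k!)²`. -/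
noncomputable def besselI0 (x : ℝ) : ℝ :=
  ∑' k : ℕ, (x / 2) ^ (2 * k) / ((k.factorial : ℝ)) ^ 2

/-!
Expanding `I₀(x/d)^d` by the multinomial rule and integrating term by term with
`∫₀^∞ xⁿ e^{-x} dx = Γ(n+1)` produces the series. All terms are nonnegative, so dominated
convergence (with the series itself as dominating function) reduces both claims to the
integrability of `I₀(x/d)^d e^{-x}` on `(0, ∞)`. This is where `d ≥ 3` enters: the bound
`(k+1) C(2k,k)² ≤ 16^k` and AM–GM compare the `k`-th term of `√(1+y) I₀(y)` with the terms of
index `2k` and `2k+1` of the exponential series, so `√(1+y) I₀(y) ≤ e^y` and the integrand is at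
most `(1 + x/d)^{-d/2}`, which is integrable for `d > 2`.
-/

theorem Nat.centralBinom_sq_mul_succ_le (n : ℕ) : n.centralBinom ^ 2 * (n + 1) ≤ 16 ^ n := by
  induction n with
  | zero => simp
  | succ n ih =>
    refine Nat.le_of_mul_le_mul_left (c := (n + 1) ^ 2) ?_ (by positivity : 0 < (n + 1) ^ 2)
    have h := Nat.succ_mul_centralBinom_succ n
    calc (n + 1) ^ 2 * ((n + 1).centralBinom ^ 2 * (n + 1 + 1))
        = ((n + 1) * (n + 1).centralBinom) ^ 2 * (n + 2) := by ring
      _ = (2 * (2 * n + 1)) ^ 2 * (n + 2) * n.centralBinom ^ 2 := by rw [h]; ring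
      _ ≤ 16 * (n + 1) ^ 2 * (n.centralBinom ^ 2 * (n + 1)) := by
          have : (2 * (2 * n + 1)) ^ 2 * (n + 2) ≤ 16 * (n + 1) ^ 2 * (n + 1) := by nlinarith
          nlinarith [Nat.zero_le (n.centralBinom ^ 2)]
      _ ≤ 16 * (n + 1) ^ 2 * 16 ^ n := Nat.mul_le_mul_left _ ih
      _ = (n + 1) ^ 2 * 16 ^ (n + 1) := by ring

theorem Nat.centralBinom_mul_factorial_sq (n : ℕ) :
    n.centralBinom * n.factorial ^ 2 = (2 * n).factorial := by
  rw [Nat.centralBinom_eq_two_mul_choose, two_mul, ← Nat.add_choose_mul_factorial_mul_factorial]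
  ring

theorem HasSum.pi_prod_of_nonneg {ι : Type*} {a : ι → ℝ} {s : ℝ} (h : HasSum a s) (ha : 0 ≤ a)
    (n : ℕ) : HasSum (fun k : Fin n → ι => ∏ j, a (k j)) (s ^ n) := by
  induction n with
  | zero => simp
  | succ n ih =>
    have hsum : Summable fun p : ι × (Fin n → ι) => a p.1 * ∏ j, a (p.2 j) :=
      h.summable.mul_of_nonneg ih.summable ha (g := fun k : Fin n → ι => ∏ j, a (k j))
        fun k => prod_nonneg fun j _ => ha (k j)
    have hprod := h.mul ih hsum
    rw [pow_succ', ← (Fin.consEquiv fun _ => ι).hasSum_iff]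
    simpa [Function.comp_def, Fin.prod_univ_succ] using hprod

theorem hasSum_integral_of_nonneg {α ι : Type*} [MeasurableSpace α] {μ : Measure α} [Countable ι]
    {F : ι → α → ℝ} {f : α → ℝ} (hF_meas : ∀ n, AEStronglyMeasurable (F n) μ)
    (hF_nonneg : ∀ n, 0 ≤ᵐ[μ] F n) (hf : Integrable f μ)
    (h_lim : ∀ᵐ a ∂μ, HasSum (fun n => F n a) (f a)) :
    HasSum (fun n => ∫ a, F n a ∂μ) (∫ a, f a ∂μ) := by
  refine hasSum_integral_of_dominated_convergence F hF_meas (fun n => ?_)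
    (h_lim.mono fun a h => h.summable) (hf.congr (h_lim.mono fun a h => h.tsum_eq.symm)) h_lim
  filter_upwards [hF_nonneg n] with a ha
  rw [Real.norm_of_nonneg ha]

theorem integral_pow_mul_exp_neg_Ioi (n : ℕ) :
    ∫ x in Set.Ioi 0, x ^ n * exp (-x) = Gamma (n + 1) := by
  rw [Gamma_eq_integral (by positivity)]
  refine setIntegral_congr_fun measurableSet_Ioi fun x _ => ?_
  rw [add_sub_cancel_right, rpow_natCast, mul_comm]

theorem hasSum_exp_even_add_odd (y : ℝ) :
    HasSum (fun k => y ^ (2 * k) / (2 * k).factorial + y ^ (2 * k + 1) / (2 * k + 1).factorial)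
      (exp y) := by
  have h := exp_eq_exp_ℝ ▸ NormedSpace.expSeries_div_hasSum_exp (𝔸 := ℝ) y
  have he := h.summable.comp_injective (mul_right_injective₀ (two_ne_zero' ℕ))
  have ho := h.summable.comp_injective
    ((add_left_injective 1).comp (mul_right_injective₀ (two_ne_zero' ℕ)))
  have hsplit := he.hasSum.add ho.hasSum
  rwa [← h.unique (he.hasSum.even_add_odd ho.hasSum)] at hsplit

noncomputable def besselI0Term (y : ℝ) (k : ℕ) : ℝ :=
  (y / 2) ^ (2 * k) / (k.factorial : ℝ) ^ 2

theorem besselI0Term_nonneg (y : ℝ) : 0 ≤ besselI0Term y := fun k => by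
  unfold besselI0Term; rw [pow_mul]; positivity

theorem besselI0Term_abs (y : ℝ) : besselI0Term |y| = besselI0Term y := by
  ext k; simp only [besselI0Term, pow_mul, div_pow, sq_abs]

theorem besselI0Term_eq (y : ℝ) (k : ℕ) :
    besselI0Term y k = k.centralBinom / 4 ^ k * (y ^ (2 * k) / (2 * k).factorial) := by
  have : (k.centralBinom : ℝ) ≠ 0 := Nat.cast_ne_zero.2 k.centralBinom_ne_zero
  rw [besselI0Term, ← Nat.centralBinom_mul_factorial_sq, pow_mul, pow_mul, div_pow, div_pow,
    show ((2 : ℝ) ^ 2) ^ k = 4 ^ k by norm_num]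
  push_cast
  field_simp

theorem besselI0Term_mul_sqrt_le {y : ℝ} (hy : 0 ≤ y) (k : ℕ) :
    besselI0Term y k * √(1 + y) ≤
      y ^ (2 * k) / (2 * k).factorial + y ^ (2 * k + 1) / (2 * k + 1).factorial := by
  have hodd : y ^ (2 * k + 1) / (2 * k + 1).factorial =
      y / (2 * k + 1) * (y ^ (2 * k) / (2 * k).factorial) := by
    rw [Nat.factorial_succ]; push_cast; field_simp; ring
  have ha : 0 ≤ y ^ (2 * k) / (2 * k).factorial := by rw [pow_mul]; positivity
  rw [besselI0Term_eq, hodd]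
  set c : ℝ := k.centralBinom / 4 ^ k
  set s := √(1 + y)
  have hc : c ^ 2 * (k + 1) ≤ 1 := by
    have h16 : ((4 : ℝ) ^ k) ^ 2 = 16 ^ k := by rw [← pow_mul, mul_comm, pow_mul]; norm_num
    rw [div_pow, h16, div_mul_eq_mul_div, div_le_one (by positivity)]
    exact_mod_cast Nat.centralBinom_sq_mul_succ_le k
  have hs : s ^ 2 = 1 + y := sq_sqrt (by linarith)
  have key : c * s ≤ 1 + y / (2 * k + 1) := by
    -- AM–GM: `2 (c (k + 1)) s ≤ c² (k + 1)² + s² ≤ (k + 1) + (1 + y)`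
    have hcs : 2 * (c * s) * (k + 1) ≤ k + 2 + y := by
      nlinarith [sq_nonneg (c * (k + 1) - s),
        mul_le_mul_of_nonneg_right hc (by positivity : (0 : ℝ) ≤ k + 1)]
    calc c * s ≤ (k + 2) / (2 * k + 2) + y / (2 * k + 2) := by
          rw [← add_div, le_div_iff₀ (by positivity)]; linarith
      _ ≤ 1 + y / (2 * k + 1) := by
          gcongr
          · rw [div_le_one (by positivity)]; linarith
          · linarith
  calc c * (y ^ (2 * k) / (2 * k).factorial) * s
      = c * s * (y ^ (2 * k) / (2 * k).factorial) := by ring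
    _ ≤ (1 + y / (2 * k + 1)) * (y ^ (2 * k) / (2 * k).factorial) :=
        mul_le_mul_of_nonneg_right key ha
    _ = _ := by ring

theorem summable_besselI0Term (y : ℝ) : Summable (besselI0Term y) := by
  rw [← besselI0Term_abs]
  refine (hasSum_exp_even_add_odd |y|).summable.of_nonneg_of_le (besselI0Term_nonneg _) fun k => ?_
  refine le_trans ?_ (besselI0Term_mul_sqrt_le (abs_nonneg y) k)
  refine le_mul_of_one_le_right (besselI0Term_nonneg _ k) ?_
  rw [one_le_sqrt]; linarith [abs_nonneg y]

theorem hasSum_besselI0 (y : ℝ) : HasSum (besselI0Term y) (besselI0 y) :=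
  (summable_besselI0Term y).hasSum

theorem besselI0_nonneg (y : ℝ) : 0 ≤ besselI0 y :=
  (hasSum_besselI0 y).nonneg (besselI0Term_nonneg y)

@[fun_prop]
theorem measurable_besselI0 : Measurable besselI0 := by
  refine measurable_of_tendsto_metrizable' Filter.atTop
    (f := fun n y => ∑ k ∈ range n, besselI0Term y k) (fun n => ?_) ?_
  · unfold besselI0Term; fun_prop
  · exact tendsto_pi_nhds.2 fun y => (hasSum_besselI0 y).tendsto_sum_nat

theorem sqrt_one_add_mul_besselI0_le_exp {y : ℝ} (hy : 0 ≤ y) :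
    √(1 + y) * besselI0 y ≤ exp y := by
  rw [← (hasSum_besselI0 y).tsum_eq, ← tsum_mul_left, ← (hasSum_exp_even_add_odd y).tsum_eq]
  refine ((summable_besselI0Term y).mul_left _).tsum_le_tsum (fun k => ?_)
    (hasSum_exp_even_add_odd y).summable
  rw [mul_comm]
  exact besselI0Term_mul_sqrt_le hy k

theorem besselI0_pow_mul_exp_neg_le {d : ℕ} (hd : 3 ≤ d) {x : ℝ} (hx : 0 ≤ x) :
    besselI0 (x / d) ^ d * exp (-x) ≤ (1 + x / d) ^ (-(3 / 2) : ℝ) := by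
  have hd0 : (d : ℝ) ≠ 0 := by norm_cast; omega
  set y := x / d
  have hy : 0 ≤ y := by positivity
  have hs : 1 ≤ √(1 + y) := by rw [one_le_sqrt]; linarith
  have hexp : exp y ^ d * exp (-x) = 1 := by
    rw [← exp_nat_mul, ← exp_add, mul_div_cancel₀ _ hd0, add_neg_cancel, exp_zero]
  have hbound : besselI0 y ^ d * exp (-x) * √(1 + y) ^ d ≤ 1 := by
    calc besselI0 y ^ d * exp (-x) * √(1 + y) ^ d = (√(1 + y) * besselI0 y) ^ d * exp (-x) := by
          ring
      _ ≤ exp y ^ d * exp (-x) := by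
          gcongr
          · exact mul_nonneg (sqrt_nonneg _) (besselI0_nonneg y)
          · exact sqrt_one_add_mul_besselI0_le_exp hy
      _ = 1 := hexp
  have hrpow : (1 + y) ^ (-(3 / 2) : ℝ) = (√(1 + y) ^ 3)⁻¹ := by
    rw [rpow_neg (by linarith), sqrt_eq_rpow, ← rpow_natCast, ← rpow_mul (by linarith)]
    norm_num
  have hf : 0 ≤ besselI0 y ^ d * exp (-x) := by have := besselI0_nonneg y; positivity
  rw [hrpow, ← one_div, le_div_iff₀ (by positivity)]
  exact (mul_le_mul_of_nonneg_left (pow_le_pow_right₀ hs hd) hf).trans hbound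

theorem integrableOn_besselI0_pow_mul_exp_neg {d : ℕ} (hd : 3 ≤ d) :
    IntegrableOn (fun x => besselI0 (x / d) ^ d * exp (-x)) (Set.Ioi 0) := by
  have hg : Integrable fun x : ℝ => (1 + ‖x / d‖) ^ (-(3 / 2) : ℝ) :=
    (integrable_one_add_norm (by norm_num)).comp_div (by norm_cast; omega)
  refine hg.integrableOn.mono' (by fun_prop) ?_
  filter_upwards [ae_restrict_mem measurableSet_Ioi] with x hx
  have hx : 0 ≤ x := le_of_lt hx
  rw [norm_of_nonneg (by have := besselI0_nonneg (x / d); positivity),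
    norm_of_nonneg (by positivity)]
  exact besselI0_pow_mul_exp_neg_le hd hx

theorem integral_prod_besselI0Term_mul_exp_neg {ι : Type*} [Fintype ι] (c : ℝ) (k : ι → ℕ) :
    ∫ x in Set.Ioi 0, (∏ j, besselI0Term (x / c) (k j)) * exp (-x) =
      Gamma (2 * (∑ j, (k j : ℝ)) + 1) /
        ((∏ j, ((k j).factorial : ℝ) ^ 2) * (2 * c) ^ (2 * ∑ j, k j)) := by
  have hterm : ∀ x : ℝ, (∏ j, besselI0Term (x / c) (k j)) * exp (-x) =
      ((∏ j, ((k j).factorial : ℝ) ^ 2) * (2 * c) ^ (2 * ∑ j, k j))⁻¹ *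
        (x ^ (2 * ∑ j, k j) * exp (-x)) := fun x => by
    simp only [besselI0Term, div_div, div_pow, prod_div_distrib, prod_mul_distrib,
      prod_pow_eq_pow_sum, ← mul_sum]
    ring
  simp only [hterm, integral_const_mul, integral_pow_mul_exp_neg_Ioi]
  push_cast
  ring

/-- For every integer `d ≥ 3`,
`∫₀^∞ [I₀(x/d)]^d e^{-x} dx = ∑_{k₁,…,k_d ≥ 0} Γ(2k₁+⋯+2k_d+1) / ((k₁!⋯k_d!)² (2d)^{2(k₁+⋯+k_d)})`,
and this multiple series is convergent. -/
theorem integral_besselI0_pow_eq_multiple_series (d : ℕ) (hd : 3 ≤ d) :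
    Summable (fun k : Fin d → ℕ =>
      Real.Gamma (2 * (∑ j, (k j : ℝ)) + 1) /
        ((∏ j, ((k j).factorial : ℝ) ^ 2) * (2 * d : ℝ) ^ (2 * ∑ j, k j))) ∧
    (∫ x in Set.Ioi (0 : ℝ), (besselI0 (x / d)) ^ d * Real.exp (-x)) =
      ∑' k : Fin d → ℕ,
        Real.Gamma (2 * (∑ j, (k j : ℝ)) + 1) /
          ((∏ j, ((k j).factorial : ℝ) ^ 2) * (2 * d : ℝ) ^ (2 * ∑ j, k j)) := by
  have h := hasSum_integral_of_nonneg (μ := volume.restrict (Set.Ioi 0))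
    (F := fun (k : Fin d → ℕ) x => (∏ j, besselI0Term (x / d) (k j)) * exp (-x))
    (fun k => by unfold besselI0Term; fun_prop)
    (fun k => ae_of_all _ fun x =>
      mul_nonneg (prod_nonneg fun j _ => besselI0Term_nonneg _ _) (exp_pos _).le)
    (integrableOn_besselI0_pow_mul_exp_neg hd)
    (ae_of_all _ fun x =>
      ((hasSum_besselI0 (x / d)).pi_prod_of_nonneg (besselI0Term_nonneg _) d).mul_right _)
  simp only [integral_prod_besselI0Term_mul_exp_neg] at h
  exact ⟨h.summable, h.tsum_eq.symm⟩
end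

section
/- For every integer d ≥ 3, the d-indexed family (k₁, …, k_d) ↦ (1)_{k₁+⋯+k_d} (1/2)_{k₁+⋯+k_d} / ((k₁)!² ⋯ (k_d)!² · d^{2(k₁+⋯+k_d)}) of nonnegative real numbers is summable; that is, the Lauricella series F_C^{(d)}(1, 1/2; 1, …, 1; 1/d², …, 1/d²) converges. -/
/-!
Write `n = k₁ + ⋯ + k_d`. Since `(1)ₙ = n!` and `(1/2)ₙ = n! C(2n, n) / 4ⁿ`, the term equals
`C(2n, n) / 4ⁿ · p(k)²` with `p(k) = M(k) / dⁿ`, where `M(k)` is the multinomial coefficient.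
As `p` is a probability distribution on the compositions of `n`, the `n`-th fibre sum is at most
`C(2n, n) / 4ⁿ · max p`. Stirling's bounds give `C(2n, n) / 4ⁿ = O(n^(-1/2))`; combined with
Jensen's inequality for the convex function `(x - 1/2) log x` at the points `kⱼ + 1` they give
`max p = O(n^(-(d-1)/2))`. So the fibre sums are `O(n^(-d/2))`, which is summable for `d ≥ 3`.
-/

open Finset Real Filter Asymptotics
open scoped Nat

theorem log_factorial_le_stirling {n : ℕ} (hn : n ≠ 0) :
    log n ! ≤ n * log n - n + log n / 2 + 1 := by
  have hseq : Stirling.stirlingSeq n ≤ exp 1 / √2 := by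
    obtain ⟨m, rfl⟩ := Nat.exists_eq_succ_of_ne_zero hn
    simpa [Stirling.stirlingSeq_one] using Stirling.stirlingSeq'_antitone (Nat.zero_le m)
  have hlog : log (Stirling.stirlingSeq n) ≤ 1 - log 2 / 2 := by
    calc log (Stirling.stirlingSeq n)
        ≤ log (exp 1 / √2) :=
          log_le_log ((sqrt_pos.2 pi_pos).trans_le (Stirling.sqrt_pi_le_stirlingSeq hn)) hseq
      _ = 1 - log 2 / 2 := by
          rw [log_div (by positivity) (by positivity), log_exp, log_sqrt zero_le_two]
  have hn' : (0 : ℝ) < n := by positivity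
  have hformula := Stirling.log_stirlingSeq_formula n
  rw [log_mul two_ne_zero hn'.ne', log_div hn'.ne' (exp_pos 1).ne', log_exp] at hformula
  linarith

-- Stirling's bound taken at `k + 1`, so that it is not trivial at `k = 0`.
theorem le_log_factorial_stirling_succ (k : ℕ) :
    ((k + 1 : ℝ) - 1 / 2) * log (k + 1) - (k + 1) + log (2 * π) / 2 ≤ log k ! := by
  have hstirling := Stirling.le_log_factorial_stirling k.succ_ne_zero
  have hsucc : log (k + 1)! = log (k + 1) + log k ! := by
    rw [Nat.factorial_succ, Nat.cast_mul, log_mul (by positivity) (by positivity)]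
    push_cast
    rfl
  push_cast at hstirling
  linarith

theorem convexOn_sub_half_mul_log :
    ConvexOn ℝ (Set.Ioi 0) fun x : ℝ ↦ (x - 1 / 2) * log x := by
  refine ((convexOn_mul_log.subset Set.Ioi_subset_Ici_self (convex_Ioi 0)).add
    (strictConcaveOn_log_Ioi.concaveOn.neg.smul (by norm_num : (0 : ℝ) ≤ 1 / 2))).congr
    fun x _ ↦ ?_
  simp only [Pi.add_apply, Pi.neg_apply, smul_eq_mul]
  ring

theorem le_sum_sub_half_mul_log {ι : Type*} [Fintype ι] [Nonempty ι] {x : ι → ℝ}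
    (hx : ∀ i, 0 < x i) :
    (∑ i, x i - Fintype.card ι / 2) * log ((∑ i, x i) / Fintype.card ι) ≤
      ∑ i, (x i - 1 / 2) * log (x i) := by
  have hd : (0 : ℝ) < Fintype.card ι := by exact_mod_cast Fintype.card_pos
  set d : ℝ := (Fintype.card ι : ℝ)
  have hjensen := convexOn_sub_half_mul_log.map_sum_le (t := univ) (w := fun _ ↦ d⁻¹) (p := x)
    (fun _ _ ↦ by positivity) (by simp [card_univ, d, hd.ne']) (fun i _ ↦ hx i)
  simp only [smul_eq_mul, ← mul_sum] at hjensen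
  calc (∑ i, x i - d / 2) * log ((∑ i, x i) / d)
      = d * ((d⁻¹ * ∑ i, x i - 1 / 2) * log (d⁻¹ * ∑ i, x i)) := by
        rw [inv_mul_eq_div]; field_simp
    _ ≤ d * (d⁻¹ * ∑ i, (x i - 1 / 2) * log (x i)) := mul_le_mul_of_nonneg_left hjensen hd.le
    _ = ∑ i, (x i - 1 / 2) * log (x i) := by rw [← mul_assoc, mul_inv_cancel₀ hd.ne', one_mul]

theorem le_sum_log_factorial {ι : Type*} [Fintype ι] [Nonempty ι] (k : ι → ℕ) :
    (∑ i, (k i : ℝ) + Fintype.card ι / 2) *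
        log ((∑ i, (k i : ℝ) + Fintype.card ι) / Fintype.card ι) -
      (∑ i, (k i : ℝ) + Fintype.card ι) + Fintype.card ι * log (2 * π) / 2 ≤
      ∑ i, log (k i)! := by
  have hjensen := le_sum_sub_half_mul_log (x := fun i ↦ (k i : ℝ) + 1) (fun i ↦ by positivity)
  have hstirling := sum_le_sum fun i (_ : i ∈ univ) ↦ le_log_factorial_stirling_succ (k i)
  simp only [sum_add_distrib, sum_sub_distrib, sum_const, card_univ, nsmul_eq_mul, mul_one]
    at hjensen hstirling ⊢
  linarith

theorem log_multinomial_le {ι : Type*} [Fintype ι] [Nonempty ι] (k : ι → ℕ)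
    (hk : ∑ i, k i ≠ 0) :
    log (Nat.multinomial univ k) ≤
      (∑ i, k i) * log (Fintype.card ι) - (Fintype.card ι - 1) / 2 * log (∑ i, k i) +
        (1 + Fintype.card ι + Fintype.card ι / 2 * log (Fintype.card ι / (2 * π))) := by
  have hspec : log (Nat.multinomial univ k) = log (∑ i, k i)! - ∑ i, log (k i)! := by
    have hM : (Nat.multinomial univ k : ℝ) ≠ 0 := by exact_mod_cast (Nat.multinomial_pos _ _).ne'
    have hfact : ∀ i ∈ univ, ((k i)! : ℝ) ≠ 0 := fun i _ ↦ by exact_mod_cast (k i).factorial_ne_zero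
    rw [← log_prod hfact, eq_sub_iff_add_eq, ← log_mul hM (prod_ne_zero_iff.2 hfact), mul_comm]
    exact_mod_cast congrArg (fun m : ℕ ↦ log m) (Nat.multinomial_spec univ k)
  have hlower := le_sum_log_factorial k
  have hupper := log_factorial_le_stirling hk
  have hd : (0 : ℝ) < Fintype.card ι := by exact_mod_cast Fintype.card_pos
  have hn : (0 : ℝ) < ∑ i, k i := by exact_mod_cast Nat.pos_of_ne_zero hk
  push_cast at hspec hupper hn ⊢
  set n : ℝ := ∑ i, (k i : ℝ)
  set d : ℝ := (Fintype.card ι : ℝ)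
  have hlog_le : (n + d / 2) * log n ≤ (n + d / 2) * log (n + d) :=
    mul_le_mul_of_nonneg_left (log_le_log hn (by linarith)) (by positivity)
  rw [log_div (by positivity) hd.ne'] at hlower
  rw [log_div hd.ne' (by positivity)]
  linarith

theorem log_centralBinom_le {n : ℕ} (hn : n ≠ 0) :
    log n.centralBinom ≤ n * log 4 - log n / 2 + (1 - log π - log 2 / 2) := by
  have hspec : log n.centralBinom = log (2 * n)! - 2 * log n ! := by
    have h := Nat.choose_mul_factorial_mul_factorial (Nat.le_mul_of_pos_left n two_pos)
    rw [show 2 * n - n = n by omega, ← Nat.centralBinom_eq_two_mul_choose] at h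
    rw [← h]
    push_cast
    have hfact : (n ! : ℝ) ≠ 0 := Nat.cast_ne_zero.2 (Nat.factorial_ne_zero _)
    have hCB : (n.centralBinom : ℝ) ≠ 0 := Nat.cast_ne_zero.2 n.centralBinom_ne_zero
    rw [log_mul (mul_ne_zero hCB hfact) hfact, log_mul hCB hfact]
    ring
  have hupper := log_factorial_le_stirling (by omega : 2 * n ≠ 0)
  have hlower := Stirling.le_log_factorial_stirling hn
  have hn' : (0 : ℝ) < n := by positivity
  push_cast at hupper
  rw [log_mul two_ne_zero hn'.ne'] at hupper
  rw [log_mul two_ne_zero pi_ne_zero] at hlower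
  rw [show (4 : ℝ) = 2 ^ 2 by norm_num, log_pow]
  push_cast
  linarith

theorem ascPochhammer_eval_half (n : ℕ) :
    (ascPochhammer ℝ n).eval (1 / 2) = n ! * n.centralBinom / 4 ^ n := by
  induction n with
  | zero => simp
  | succ n ih =>
    rw [ascPochhammer_succ_eval, ih, Nat.factorial_succ]
    have hrec : ((n + 1 : ℕ) : ℝ) * (n + 1).centralBinom = 2 * (2 * n + 1) * n.centralBinom := by
      exact_mod_cast Nat.succ_mul_centralBinom_succ n
    push_cast at hrec ⊢
    field_simp
    linear_combination (-2 * 4 ^ n : ℝ) * hrec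

theorem sum_multinomial_piAntidiag_univ {ι : Type*} [Fintype ι] [DecidableEq ι] (n : ℕ) :
    ∑ k ∈ piAntidiag (univ : Finset ι) n, (Nat.multinomial univ k : ℝ) =
      Fintype.card ι ^ n := by
  simpa using (sum_pow_eq_sum_piAntidiag (univ : Finset ι) (fun _ ↦ (1 : ℝ)) n).symm

theorem ascPochhammer_eval_one_mul_eval_half_div {ι : Type*} [Fintype ι] (k : ι → ℕ) (c : ℝ) :
    (ascPochhammer ℝ (∑ i, k i)).eval 1 * (ascPochhammer ℝ (∑ i, k i)).eval (1 / 2) /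
        ((∏ i, ((k i)! : ℝ) ^ 2) * c ^ (2 * ∑ i, k i)) =
      (∑ i, k i).centralBinom / 4 ^ (∑ i, k i) *
        (Nat.multinomial univ k / c ^ (∑ i, k i)) ^ 2 := by
  have hspec : (∏ i, ((k i)! : ℝ)) * Nat.multinomial univ k = (∑ i, k i)! := by
    exact_mod_cast Nat.multinomial_spec univ k
  rw [ascPochhammer_eval_one, ascPochhammer_eval_half, ← hspec, prod_pow, pow_mul']
  have hfact : ∏ i, ((k i)! : ℝ) ≠ 0 := prod_ne_zero_iff.2 fun i _ ↦ by positivity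
  field_simp

theorem centralBinom_div_mul_multinomial_div_le {ι : Type*} [Fintype ι] [Nonempty ι]
    (k : ι → ℕ) (hk : ∑ i, k i ≠ 0) :
    (∑ i, k i).centralBinom / 4 ^ (∑ i, k i) *
        (Nat.multinomial univ k / (Fintype.card ι : ℝ) ^ (∑ i, k i)) ≤
      exp ((1 - log π - log 2 / 2) +
          (1 + Fintype.card ι + Fintype.card ι / 2 * log (Fintype.card ι / (2 * π)))) *
        ((∑ i, k i : ℕ) : ℝ) ^ (-(Fintype.card ι / 2 : ℝ)) := by
  have hCB := log_centralBinom_le hk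
  have hM := log_multinomial_le k hk
  have hd : (0 : ℝ) < Fintype.card ι := by exact_mod_cast Fintype.card_pos
  have hn : (0 : ℝ) < ((∑ i, k i : ℕ) : ℝ) := by exact_mod_cast Nat.pos_of_ne_zero hk
  have hCB0 : (0 : ℝ) < (∑ i, k i).centralBinom := by exact_mod_cast Nat.centralBinom_pos _
  have hM0 : (0 : ℝ) < Nat.multinomial univ k := by exact_mod_cast Nat.multinomial_pos _ _
  rw [rpow_def_of_pos hn, ← exp_add, ← exp_log (by positivity : (0 : ℝ) < _ * _)]
  refine exp_le_exp.2 ?_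
  rw [log_mul (by positivity) (by positivity), log_div hCB0.ne' (by positivity),
    log_div hM0.ne' (by positivity), log_pow, log_pow]
  push_cast at hCB hM ⊢
  linarith

theorem isBigO_sum_piAntidiag_centralBinom_mul_multinomial_sq {ι : Type*} [Fintype ι]
    [DecidableEq ι] [Nonempty ι] :
    (fun n : ℕ ↦ ∑ k ∈ piAntidiag (univ : Finset ι) n,
        (n.centralBinom / 4 ^ n * (Nat.multinomial univ k / (Fintype.card ι : ℝ) ^ n) ^ 2 : ℝ))
      =O[atTop] fun n ↦ (n : ℝ) ^ (-(Fintype.card ι / 2 : ℝ)) := by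
  have hd : (0 : ℝ) < Fintype.card ι := by exact_mod_cast Fintype.card_pos
  set d : ℝ := (Fintype.card ι : ℝ)
  set K : ℝ := (1 - log π - log 2 / 2) + (1 + d + d / 2 * log (d / (2 * π)))
  refine IsBigO.of_bound (exp K) ?_
  filter_upwards [eventually_ne_atTop 0] with n hn
  have hprob :
      ∑ k ∈ piAntidiag (univ : Finset ι) n, (Nat.multinomial univ k : ℝ) / d ^ n = 1 := by
    rw [← sum_div, sum_multinomial_piAntidiag_univ, div_self (by positivity)]
  rw [norm_of_nonneg (sum_nonneg fun _ _ ↦ by positivity), norm_of_nonneg (by positivity)]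
  calc ∑ k ∈ piAntidiag (univ : Finset ι) n,
        n.centralBinom / 4 ^ n * (Nat.multinomial univ k / d ^ n) ^ 2
      = ∑ k ∈ piAntidiag univ n,
          n.centralBinom / 4 ^ n * (Nat.multinomial univ k / d ^ n) *
            (Nat.multinomial univ k / d ^ n) :=
        sum_congr rfl fun k _ ↦ by ring
    _ ≤ ∑ k ∈ piAntidiag univ n,
          exp K * (n : ℝ) ^ (-(d / 2)) * (Nat.multinomial univ k / d ^ n) := by
        refine sum_le_sum fun k hk ↦ mul_le_mul_of_nonneg_right ?_ (by positivity)
        obtain ⟨hsum, -⟩ := mem_piAntidiag.1 hk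
        have h := centralBinom_div_mul_multinomial_div_le k (hsum ▸ hn)
        rwa [hsum] at h
    _ = exp K * (n : ℝ) ^ (-(d / 2)) := by rw [← mul_sum, hprob, mul_one]

theorem summable_iff_summable_sum_piAntidiag {ι : Type*} [Fintype ι] [DecidableEq ι]
    {f : (ι → ℕ) → ℝ} (hf : 0 ≤ f) :
    Summable f ↔ Summable fun n ↦ ∑ k ∈ piAntidiag (univ : Finset ι) n, f k := by
  rw [summable_partition hf (s := fun n ↦ ↑(piAntidiag (univ : Finset ι) n))
    fun k ↦ ⟨∑ i, k i, by simp, fun n hn ↦ by simp_all⟩]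
  simp only [Finset.tsum_subtype']
  exact and_iff_right fun n ↦ Summable.of_finite

/-- For every integer `d ≥ 3`, the multi-indexed family defining the Lauricella series
`F_C^{(d)}(1, 1/2; 1, …, 1; 1/d², …, 1/d²)` is summable. -/
theorem summable_lauricellaFC_family (d : ℕ) (hd : 3 ≤ d) :
    Summable (fun k : Fin d → ℕ =>
      (ascPochhammer ℝ (∑ j, k j)).eval 1 * (ascPochhammer ℝ (∑ j, k j)).eval (1 / 2) /
        ((∏ j, ((k j).factorial : ℝ) ^ 2) * (d : ℝ) ^ (2 * ∑ j, k j))) := by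
  have : Nonempty (Fin d) := ⟨⟨0, by omega⟩⟩
  simp_rw [ascPochhammer_eval_one_mul_eval_half_div]
  rw [summable_iff_summable_sum_piAntidiag fun k ↦ by positivity]
  refine (summable_of_isBigO_nat (Real.summable_nat_rpow.2 ?_)
    isBigO_sum_piAntidiag_centralBinom_mul_multinomial_sq).congr fun n ↦
      sum_congr rfl fun k hk ↦ by rw [(mem_piAntidiag.1 hk).1, Fintype.card_fin]
  rw [Fintype.card_fin]
  have : (3 : ℝ) ≤ d := by exact_mod_cast hd
  linarith
end
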